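/- arXiv:1805.07456 — 4 statements merged into one kernel-verified Lean document; each statement's English description precedes it below -/
import Mathlib

section
/- Let L be the out-Laplacian of an SCWB digraph on N ≥ 2 nodes, let β > 0 and γ ≥ 0. Let r : [0,∞) → ℝ^N be differentiable with ‖Π_N r′(t)‖ ≤ γ for all t ≥ 0, and let x : [0,∞) → ℝ^N be differentiable and satisfy x′(t) = −β L x(t) + r′(t) for all t ≥ 0 together with the initialization 1_Nᵀ (x(0) − r(0)) = 0. Then the tracking-error trajectory t ↦ x(t) − (1/N)(Σ_{j=1}^N r_j(t)) 1_N is bounded on [0,∞), and for every node i, limsup_{t→∞} | x_i(t) − (1/N) Σ_{j=1}^N r_j(t) | ≤ γ/(β λ̂₂). -/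
open Matrix Filter

/-- `A` is a nonnegative weighted adjacency matrix with zero diagonal. -/
def IsAdjacencyMatrix {N : ℕ} (A : Matrix (Fin N) (Fin N) ℝ) : Prop :=
  (∀ i j, 0 ≤ A i j) ∧ ∀ i, A i i = 0

/-- `L` is the out-Laplacian of the weighted digraph with adjacency matrix `A`:
`L i i = ∑ j, A i j` and `L i j = -A i j` for `i ≠ j`. -/
def IsOutLaplacian {N : ℕ} (A L : Matrix (Fin N) (Fin N) ℝ) : Prop :=
  (∀ i, L i i = ∑ j, A i j) ∧ ∀ i j, i ≠ j → L i j = -A i j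

/-- Strong connectivity: there is a directed edge from `u` to `v` iff `A v u > 0`, and any
ordered pair of distinct nodes is joined by a directed path. -/
def IsStronglyConnected {N : ℕ} (A : Matrix (Fin N) (Fin N) ℝ) : Prop :=
  ∀ i j : Fin N, i ≠ j → Relation.TransGen (fun u v => 0 < A v u) i j

/-- Weight-balanced: the column sums of the out-Laplacian vanish, i.e. `1ᵀ L = 0`. -/
def IsWeightBalanced {N : ℕ} (L : Matrix (Fin N) (Fin N) ℝ) : Prop :=
  ∀ j, ∑ i, L i j = 0

/-- The all-ones vector `1_N`. -/
noncomputable def ones (N : ℕ) : EuclideanSpace ℝ (Fin N) := WithLp.toLp 2 (fun _ => 1)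

/-- The average `(1/N) ∑ j v j` of the entries of a vector. -/
noncomputable def avg {N : ℕ} (v : EuclideanSpace ℝ (Fin N)) : ℝ := (∑ j, v j) / N

/-- The projection `Π_N v = v - avg(v) • 1_N` onto the orthogonal complement of `1_N`. -/
noncomputable def proj {N : ℕ} (v : EuclideanSpace ℝ (Fin N)) : EuclideanSpace ℝ (Fin N) :=
  v - avg v • ones N

/-!
Because `1ᵀ L = 0`, the dynamics conserve `∑ (x - r)`, so by the initialization
`avg x(t) = avg r(t)` and the tracking error `e = x - avg(r) 1` equals `Π_N x`, which is orthogonal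
to `1`; because `L 1 = 0`, it obeys `ė = -β L e + Π_N ṙ`. Strong connectivity makes
`ker Sym(L) = span 1`, so expanding in an eigenbasis of `Sym(L)` gives `⟪L e, e⟫ ≥ λ̂₂ ‖e‖²`.
Hence `d/dt ‖e‖² ≤ -2βλ̂₂ ‖e‖² + 2γ ‖e‖ ≤ -βλ̂₂ ‖e‖² + γ² / (βλ̂₂)`, and Grönwall bounds `‖e‖²`
by a function converging to `(γ / (βλ̂₂))²`.
-/

open scoped RealInnerProductSpace
open Set Topology Real Module.End

theorem Matrix.two_mul_dotProduct_mulVec_of_sum_eq_zero {n R : Type*} [Fintype n] [CommRing R]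
    {M : Matrix n n R} (hrow : ∀ i, ∑ j, M i j = 0) (hcol : ∀ j, ∑ i, M i j = 0) (v : n → R) :
    2 * (v ⬝ᵥ (M *ᵥ v)) = -∑ i, ∑ j, M i j * (v i - v j) ^ 2 := by
  have hexp : ∀ i j, M i j * (v i - v j) ^ 2
      = M i j * v i ^ 2 + M i j * v j ^ 2 - 2 * (v i * (M i j * v j)) := fun i j => by ring
  have hleft : ∑ i, ∑ j, M i j * v i ^ 2 = 0 := by simp [← Finset.sum_mul, hrow]
  have hright : ∑ i, ∑ j, M i j * v j ^ 2 = 0 := by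
    rw [Finset.sum_comm]; simp [← Finset.sum_mul, hcol]
  simp only [hexp, Finset.sum_sub_distrib, Finset.sum_add_distrib, hleft, hright, ← Finset.mul_sum]
  simp only [dotProduct, mulVec, Finset.mul_sum]
  ring

theorem Matrix.dotProduct_half_smul_add_transpose_mulVec {n : Type*} [Fintype n]
    (M : Matrix n n ℝ) (v : n → ℝ) :
    v ⬝ᵥ (((2:ℝ)⁻¹ • (M + Mᵀ)) *ᵥ v) = v ⬝ᵥ (M *ᵥ v) := by
  rw [smul_mulVec, add_mulVec, mulVec_transpose, dotProduct_smul, dotProduct_add,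
    dotProduct_comm v (v ᵥ* M), ← dotProduct_mulVec]
  simp only [smul_eq_mul]; ring

theorem Matrix.isHermitian_half_smul_add_transpose {n : Type*} (M : Matrix n n ℝ) :
    ((2:ℝ)⁻¹ • (M + Mᵀ)).IsHermitian :=
  isHermitian_iff_isSymm.mpr ((isSymm_add_transpose_self M).smul _)

theorem Matrix.hasEigenvalue_toEuclideanLin_iff {n : Type*} [Fintype n] [DecidableEq n]
    {M : Matrix n n ℝ} {ν : ℝ} :
    HasEigenvalue (toEuclideanLin M) ν ↔ ν ∈ spectrum ℝ M := by
  rw [hasEigenvalue_iff_mem_spectrum, spectrum_toLpLin]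

theorem Matrix.real_inner_toEuclideanLin_self {n : Type*} [Fintype n] [DecidableEq n]
    (M : Matrix n n ℝ) (v : EuclideanSpace ℝ n) :
    ⟪toEuclideanLin M v, v⟫ = v ⬝ᵥ (M *ᵥ v) := by
  simp [EuclideanSpace.inner_eq_star_dotProduct, toLpLin_apply]

theorem LinearMap.IsSymmetric.mul_norm_sq_le_inner_of_mem_orthogonal_ker
    {E : Type*} [NormedAddCommGroup E] [InnerProductSpace ℝ E] [FiniteDimensional ℝ E]
    {T : E →ₗ[ℝ] E} (hT : T.IsSymmetric) {μ : ℝ}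
    (hμ : ∀ ν, HasEigenvalue T ν → ν ≠ 0 → μ ≤ ν) {v : E} (hv : v ∈ (LinearMap.ker T)ᗮ) :
    μ * ‖v‖ ^ 2 ≤ ⟪T v, v⟫ := by
  set b := hT.eigenvectorBasis rfl
  set ev := hT.eigenvalues rfl
  have hTb : ∀ i, ⟪T v, b i⟫ = ev i * ⟪v, b i⟫ := fun i => by
    rw [hT, hT.apply_eigenvectorBasis, real_inner_smul_right]; rfl
  have hterm : ∀ i, μ * ⟪v, b i⟫ ^ 2 ≤ ev i * ⟪v, b i⟫ ^ 2 := fun i => by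
    by_cases h0 : ev i = 0
    · have hker : b i ∈ LinearMap.ker T := by
        rw [LinearMap.mem_ker, hT.apply_eigenvectorBasis]; simp [ev, h0]
      simp [Submodule.inner_left_of_mem_orthogonal hker hv]
    · exact mul_le_mul_of_nonneg_right (hμ _ (hT.hasEigenvalue_eigenvalues rfl i) h0) (sq_nonneg _)
  calc μ * ‖v‖ ^ 2 = ∑ i, μ * ⟪v, b i⟫ ^ 2 := by
        rw [← b.sum_sq_norm_inner_left, Finset.mul_sum]; simp
    _ ≤ ∑ i, ev i * ⟪v, b i⟫ ^ 2 := Finset.sum_le_sum fun i _ => hterm i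
    _ = ⟪T v, v⟫ := by
        rw [← b.sum_inner_mul_inner]
        refine Finset.sum_congr rfl fun i _ => ?_
        rw [hTb, real_inner_comm (b i)]; ring

theorem IsWeightBalanced.sum_mulVec {N : ℕ} {L : Matrix (Fin N) (Fin N) ℝ}
    (hWB : IsWeightBalanced L) (v : Fin N → ℝ) : ∑ i, (L *ᵥ v) i = 0 := by
  simp only [mulVec, dotProduct]
  rw [Finset.sum_comm]
  simp [← Finset.sum_mul, hWB _]

namespace IsOutLaplacian

variable {N : ℕ} {A L : Matrix (Fin N) (Fin N) ℝ}

theorem sum_apply_right (hA : IsAdjacencyMatrix A) (hL : IsOutLaplacian A L) (i : Fin N) :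
    ∑ j, L i j = 0 := by
  have hdiag : ∀ j, L i j = (if i = j then ∑ k, A i k else 0) - A i j := fun j => by
    by_cases h : i = j
    · subst h; simp [hL.1 i, hA.2 i]
    · simp [h, hL.2 i j h]
  simp [hdiag, Finset.sum_sub_distrib]

theorem mulVec_const (hA : IsAdjacencyMatrix A) (hL : IsOutLaplacian A L) (c : ℝ) :
    L *ᵥ (fun _ => c) = 0 := by
  ext i
  simp [mulVec, dotProduct, ← Finset.sum_mul, hL.sum_apply_right hA i]

theorem toEuclideanLin_ones (hA : IsAdjacencyMatrix A) (hL : IsOutLaplacian A L) :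
    toEuclideanLin L (ones N) = 0 := by
  rw [ones, toLpLin_toLp, toLin'_apply, hL.mulVec_const hA]; rfl

theorem two_mul_dotProduct_mulVec (hA : IsAdjacencyMatrix A) (hL : IsOutLaplacian A L)
    (hWB : IsWeightBalanced L) (v : Fin N → ℝ) :
    2 * (v ⬝ᵥ (L *ᵥ v)) = ∑ i, ∑ j, A i j * (v i - v j) ^ 2 := by
  rw [two_mul_dotProduct_mulVec_of_sum_eq_zero (hL.sum_apply_right hA) hWB,
    ← Finset.sum_neg_distrib]
  refine Finset.sum_congr rfl fun i _ => ?_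
  rw [← Finset.sum_neg_distrib]
  refine Finset.sum_congr rfl fun j _ => ?_
  by_cases h : i = j
  · simp [h]
  · rw [hL.2 i j h]; ring

theorem dotProduct_mulVec_nonneg (hA : IsAdjacencyMatrix A) (hL : IsOutLaplacian A L)
    (hWB : IsWeightBalanced L) (v : Fin N → ℝ) : 0 ≤ v ⬝ᵥ (L *ᵥ v) := by
  have hsum : 0 ≤ ∑ i, ∑ j, A i j * (v i - v j) ^ 2 :=
    Finset.sum_nonneg fun i _ => Finset.sum_nonneg fun j _ => mul_nonneg (hA.1 i j) (sq_nonneg _)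
  linarith [hL.two_mul_dotProduct_mulVec hA hWB v]

theorem apply_eq_of_dotProduct_mulVec_eq_zero (hA : IsAdjacencyMatrix A) (hL : IsOutLaplacian A L)
    (hSC : IsStronglyConnected A) (hWB : IsWeightBalanced L) {v : Fin N → ℝ}
    (hv : v ⬝ᵥ (L *ᵥ v) = 0) (i j : Fin N) : v i = v j := by
  have hsum : ∑ i, ∑ j, A i j * (v i - v j) ^ 2 = 0 := by
    rw [← hL.two_mul_dotProduct_mulVec hA hWB, hv, mul_zero]
  have hterm : ∀ i j, A i j * (v i - v j) ^ 2 = 0 := fun i j => by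
    have hnonneg : ∀ i j, 0 ≤ A i j * (v i - v j) ^ 2 := fun i j =>
      mul_nonneg (hA.1 i j) (sq_nonneg _)
    rw [Finset.sum_eq_zero_iff_of_nonneg fun i _ => Finset.sum_nonneg fun j _ => hnonneg i j]
      at hsum
    exact (Finset.sum_eq_zero_iff_of_nonneg fun j _ => hnonneg i j).mp
      (hsum i (Finset.mem_univ i)) j (Finset.mem_univ j)
  have hedge : ∀ u w, 0 < A w u → v u = v w := fun u w huw => by
    have := hterm w u
    rw [mul_eq_zero, pow_eq_zero_iff two_ne_zero, sub_eq_zero] at this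
    exact (this.resolve_left huw.ne').symm
  rcases eq_or_ne i j with rfl | hij
  · rfl
  · have hpath := hSC i j hij
    clear hij
    induction hpath with
    | single h => exact hedge _ _ h
    | tail _ h ih => exact ih.trans (hedge _ _ h)

theorem mem_orthogonal_ker_symm_of_sum_eq_zero (hA : IsAdjacencyMatrix A)
    (hL : IsOutLaplacian A L) (hSC : IsStronglyConnected A) (hWB : IsWeightBalanced L)
    {v : EuclideanSpace ℝ (Fin N)} (hv : ∑ i, v i = 0) :
    v ∈ (LinearMap.ker (toEuclideanLin ((2:ℝ)⁻¹ • (L + Lᵀ))))ᗮ := by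
  refine (Submodule.mem_orthogonal _ v).mpr fun w hw => ?_
  have hw0 : WithLp.ofLp w ⬝ᵥ (L *ᵥ WithLp.ofLp w) = 0 := by
    rw [← dotProduct_half_smul_add_transpose_mulVec, ← real_inner_toEuclideanLin_self,
      LinearMap.mem_ker.mp hw, inner_zero_left]
  have hconst := hL.apply_eq_of_dotProduct_mulVec_eq_zero hA hSC hWB hw0
  rcases isEmpty_or_nonempty (Fin N) with _ | ⟨⟨k⟩⟩
  · simp [EuclideanSpace.inner_eq_star_dotProduct, dotProduct]
  · simp only [EuclideanSpace.inner_eq_star_dotProduct, dotProduct, star_trivial, hconst _ k,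
      ← Finset.sum_mul, hv, zero_mul]

theorem spectral_gap (hA : IsAdjacencyMatrix A) (hL : IsOutLaplacian A L)
    (hSC : IsStronglyConnected A) (hWB : IsWeightBalanced L) {lam2 : ℝ}
    (hlam2 : IsLeast {μ : ℝ | μ ≠ 0 ∧ μ ∈ spectrum ℝ ((2:ℝ)⁻¹ • (L + Lᵀ))} lam2) :
    0 < lam2 ∧ ∀ v : EuclideanSpace ℝ (Fin N), ∑ i, v i = 0 →
      lam2 * ‖v‖ ^ 2 ≤ ⟪toEuclideanLin L v, v⟫ := by
  set S : Matrix (Fin N) (Fin N) ℝ := (2:ℝ)⁻¹ • (L + Lᵀ)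
  have hquad : ∀ v : EuclideanSpace ℝ (Fin N), ⟪toEuclideanLin S v, v⟫ = ⟪toEuclideanLin L v, v⟫ :=
    fun v => by
      rw [real_inner_toEuclideanLin_self, real_inner_toEuclideanLin_self,
        dotProduct_half_smul_add_transpose_mulVec]
  obtain ⟨⟨hlam2_ne, hlam2_mem⟩, hlam2_le⟩ := hlam2
  refine ⟨lt_of_le_of_ne ?_ hlam2_ne.symm, fun v hv => ?_⟩
  · have hev : HasEigenvalue (toEuclideanLin S) lam2 :=
      hasEigenvalue_toEuclideanLin_iff.mpr hlam2_mem
    refine eigenvalue_nonneg_of_nonneg hev fun v => ?_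
    rw [RCLike.re_to_real, real_inner_comm, hquad, real_inner_toEuclideanLin_self]
    exact hL.dotProduct_mulVec_nonneg hA hWB v
  · have hT : (toEuclideanLin S).IsSymmetric :=
      isSymmetric_toEuclideanLin_iff.mpr (isHermitian_half_smul_add_transpose L)
    rw [← hquad]
    exact hT.mul_norm_sq_le_inner_of_mem_orthogonal_ker
      (fun ν hν hν0 => hlam2_le ⟨hν0, hasEigenvalue_toEuclideanLin_iff.mp hν⟩)
      (hL.mem_orthogonal_ker_symm_of_sum_eq_zero hA hSC hWB hv)

end IsOutLaplacian

theorem gronwallBound_neg_eq {δ a ε : ℝ} (ha : a ≠ 0) (t : ℝ) :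
    gronwallBound δ (-a) ε t = δ * exp (-a * t) + ε / a * (1 - exp (-a * t)) := by
  rw [gronwallBound_of_K_ne_0 (neg_ne_zero.mpr ha), div_neg]
  ring

theorem gronwallBound_neg_le_max {δ a ε t : ℝ} (ha : 0 < a) (ht : 0 ≤ t) :
    gronwallBound δ (-a) ε t ≤ max δ (ε / a) := by
  have hexp_le : exp (-a * t) ≤ 1 := exp_le_one_iff.mpr (by nlinarith)
  rw [gronwallBound_neg_eq ha.ne']
  nlinarith [le_max_left δ (ε / a), le_max_right δ (ε / a), exp_pos (-a * t)]

theorem tendsto_gronwallBound_neg {δ a ε : ℝ} (ha : 0 < a) :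
    Tendsto (gronwallBound δ (-a) ε) atTop (𝓝 (ε / a)) := by
  have hexp : Tendsto (fun t => exp (-a * t)) atTop (𝓝 0) :=
    tendsto_exp_atBot.comp (tendsto_id.const_mul_atTop_of_neg (neg_lt_zero.mpr ha))
  have := (hexp.const_mul δ).add (((tendsto_const_nhds (x := (1 : ℝ))).sub hexp).const_mul (ε / a))
  simp only [mul_zero, zero_add, sub_zero, mul_one] at this
  exact this.congr fun t => (gronwallBound_neg_eq ha.ne' t).symm

theorem norm_sq_le_gronwallBound_of_inner_deriv_le {E : Type*} [NormedAddCommGroup E]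
    [InnerProductSpace ℝ E] {e e' : ℝ → E} {a γ : ℝ} (ha : 0 < a)
    (he : ∀ t ≥ 0, HasDerivWithinAt e (e' t) (Ici 0) t)
    (hdiss : ∀ t ≥ 0, ⟪e t, e' t⟫ ≤ -a * ‖e t‖ ^ 2 + γ * ‖e t‖) {t : ℝ} (ht : 0 ≤ t) :
    ‖e t‖ ^ 2 ≤ gronwallBound (‖e 0‖ ^ 2) (-a) (γ ^ 2 / a) t := by
  have hsq : ∀ s ≥ 0, HasDerivWithinAt (‖e ·‖ ^ 2) (2 * ⟪e s, e' s⟫) (Ici 0) s :=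
    fun s hs => (he s hs).norm_sq
  -- Young's inequality `2 γ y ≤ a y² + γ² / a` linearizes the dissipation estimate in `‖e‖²`.
  have hlin : ∀ s ∈ Ico 0 t, 2 * ⟪e s, e' s⟫ ≤ -a * ‖e s‖ ^ 2 + γ ^ 2 / a := fun s hs => by
    have hyoung : 0 ≤ (a * ‖e s‖ - γ) ^ 2 / a := div_nonneg (sq_nonneg _) ha.le
    have : (a * ‖e s‖ - γ) ^ 2 / a = a * ‖e s‖ ^ 2 - 2 * γ * ‖e s‖ + γ ^ 2 / a := by
      field_simp; ring
    linarith [hdiss s hs.1]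
  simpa using le_gronwallBound_of_liminf_deriv_right_le (a := 0) (b := t)
    (fun s hs => (hsq s hs.1).continuousWithinAt.mono Icc_subset_Ici_self)
    (fun s hs _ hr => ((hsq s hs.1).mono (Ici_subset_Ici.mpr hs.1)).liminf_right_slope_le hr)
    le_rfl hlin t ⟨ht, le_rfl⟩

theorem limsup_norm_le_of_inner_deriv_le {E : Type*} [NormedAddCommGroup E]
    [InnerProductSpace ℝ E] {e e' : ℝ → E} {a γ : ℝ} (ha : 0 < a) (hγ : 0 ≤ γ)
    (he : ∀ t ≥ 0, HasDerivWithinAt e (e' t) (Ici 0) t)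
    (hdiss : ∀ t ≥ 0, ⟪e t, e' t⟫ ≤ -a * ‖e t‖ ^ 2 + γ * ‖e t‖) :
    limsup (fun t => ‖e t‖) atTop ≤ γ / a := by
  have hlim : Tendsto (fun t => √(gronwallBound (‖e 0‖ ^ 2) (-a) (γ ^ 2 / a) t)) atTop
      (𝓝 (γ / a)) := by
    have := (tendsto_gronwallBound_neg (δ := ‖e 0‖ ^ 2) (ε := γ ^ 2 / a) ha).sqrt
    rwa [div_div, ← sq, ← div_pow, sqrt_sq (div_nonneg hγ ha.le)] at this
  have hle : ∀ᶠ t in atTop, ‖e t‖ ≤ √(gronwallBound (‖e 0‖ ^ 2) (-a) (γ ^ 2 / a) t) :=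
    (eventually_ge_atTop 0).mono fun t ht =>
      le_sqrt_of_sq_le (norm_sq_le_gronwallBound_of_inner_deriv_le ha he hdiss ht)
  calc limsup (fun t => ‖e t‖) atTop
      ≤ limsup (fun t => √(gronwallBound (‖e 0‖ ^ 2) (-a) (γ ^ 2 / a) t)) atTop :=
        limsup_le_limsup hle (isCoboundedUnder_le_of_le atTop fun _ => norm_nonneg _)
          hlim.isBoundedUnder_le
    _ = γ / a := hlim.limsup_eq

theorem exists_norm_le_of_inner_deriv_le {E : Type*} [NormedAddCommGroup E]
    [InnerProductSpace ℝ E] {e e' : ℝ → E} {a γ : ℝ} (ha : 0 < a)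
    (he : ∀ t ≥ 0, HasDerivWithinAt e (e' t) (Ici 0) t)
    (hdiss : ∀ t ≥ 0, ⟪e t, e' t⟫ ≤ -a * ‖e t‖ ^ 2 + γ * ‖e t‖) :
    ∃ C, ∀ t ≥ 0, ‖e t‖ ≤ C :=
  ⟨√(max (‖e 0‖ ^ 2) (γ ^ 2 / a / a)), fun _ ht => le_sqrt_of_sq_le <|
    (norm_sq_le_gronwallBound_of_inner_deriv_le ha he hdiss ht).trans
      (gronwallBound_neg_le_max ha ht)⟩

theorem limsup_abs_apply_le_of_limsup_norm_le {ι : Type*} [Fintype ι]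
    {f : ℝ → EuclideanSpace ℝ ι} {C c : ℝ} (hC : ∀ t ≥ 0, ‖f t‖ ≤ C)
    (hc : limsup (fun t => ‖f t‖) atTop ≤ c) (i : ι) :
    limsup (fun t => |f t i|) atTop ≤ c :=
  (limsup_le_limsup (Eventually.of_forall fun t => PiLp.norm_apply_le (f t) i)
    (isCoboundedUnder_le_of_le atTop fun _ => abs_nonneg _)
    (isBoundedUnder_of_eventually_le ((eventually_ge_atTop 0).mono hC))).trans hc

section Consensus

variable {N : ℕ}

theorem sum_proj_eq_zero (v : EuclideanSpace ℝ (Fin N)) : ∑ i, proj v i = 0 := by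
  rcases eq_or_ne N 0 with rfl | hN
  · simp
  · have hN' : (N : ℝ) ≠ 0 := Nat.cast_ne_zero.mpr hN
    simp [proj, avg, ones, Finset.sum_sub_distrib, mul_div_cancel₀ _ hN']

theorem HasDerivWithinAt.avg {f : ℝ → EuclideanSpace ℝ (Fin N)} {f' : EuclideanSpace ℝ (Fin N)}
    {s : Set ℝ} {t : ℝ} (hf : HasDerivWithinAt f f' s t) :
    HasDerivWithinAt (fun t => avg (f t)) (avg f') s t :=
  (HasDerivWithinAt.fun_sum fun i _ =>
    (EuclideanSpace.proj i).hasFDerivAt.comp_hasDerivWithinAt t hf).div_const _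

theorem avg_add (v w : EuclideanSpace ℝ (Fin N)) : avg (v + w) = avg v + avg w := by
  simp [avg, Finset.sum_add_distrib, add_div]

theorem avg_smul (c : ℝ) (v : EuclideanSpace ℝ (Fin N)) : avg (c • v) = c * avg v := by
  simp [avg, ← Finset.mul_sum, mul_div_assoc]

theorem IsWeightBalanced.avg_toEuclideanLin {L : Matrix (Fin N) (Fin N) ℝ}
    (hWB : IsWeightBalanced L) (v : EuclideanSpace ℝ (Fin N)) : avg (toEuclideanLin L v) = 0 := by
  simp [avg, toLpLin_apply, hWB.sum_mulVec]

theorem avg_eq_avg_of_hasDerivWithinAt {x r x' r' : ℝ → EuclideanSpace ℝ (Fin N)}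
    (hx : ∀ t ≥ (0:ℝ), HasDerivWithinAt x (x' t) (Ici 0) t)
    (hr : ∀ t ≥ (0:ℝ), HasDerivWithinAt r (r' t) (Ici 0) t)
    (hder : ∀ t ≥ (0:ℝ), avg (x' t) = avg (r' t)) (h0 : avg (x 0) = avg (r 0))
    {t : ℝ} (ht : 0 ≤ t) : avg (x t) = avg (r t) := by
  have hdiff : ∀ s ≥ (0:ℝ), HasDerivWithinAt (fun t => avg (x t) - avg (r t)) 0 (Ici 0) s :=
    fun s hs => by simpa [hder s hs] using (hx s hs).avg.fun_sub (hr s hs).avg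
  have := constant_of_has_deriv_right_zero (a := 0) (b := t)
    (fun s hs => (hdiff s hs.1).continuousWithinAt.mono Icc_subset_Ici_self)
    (fun s hs => (hdiff s hs.1).mono (Ici_subset_Ici.mpr hs.1)) t ⟨ht, le_rfl⟩
  linarith

end Consensus

theorem statement0_general {N : ℕ}
    (A L : Matrix (Fin N) (Fin N) ℝ)
    (hA : IsAdjacencyMatrix A) (hL : IsOutLaplacian A L)
    (hSC : IsStronglyConnected A) (hWB : IsWeightBalanced L)
    (β γ : ℝ) (hβ : 0 < β)
    (lam2 : ℝ)
    (hlam2 : IsLeast {μ : ℝ | μ ≠ 0 ∧ μ ∈ spectrum ℝ ((2:ℝ)⁻¹ • (L + Lᵀ))} lam2)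
    (r x r' x' : ℝ → EuclideanSpace ℝ (Fin N))
    (hr : ∀ t ≥ (0:ℝ), HasDerivWithinAt r (r' t) (Set.Ici 0) t)
    (hx : ∀ t ≥ (0:ℝ), HasDerivWithinAt x (x' t) (Set.Ici 0) t)
    (hrbound : ∀ t ≥ (0:ℝ), ‖proj (r' t)‖ ≤ γ)
    (hdyn : ∀ t ≥ (0:ℝ), x' t = -β • (Matrix.toEuclideanLin L (x t)) + r' t)
    (hinit : ∑ i, (x 0 i - r 0 i) = 0) :
    (∃ C : ℝ, ∀ t ≥ (0:ℝ), ‖x t - avg (r t) • ones N‖ ≤ C) ∧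
    ∀ i : Fin N,
      Filter.limsup (fun t => |x t i - avg (r t)|) Filter.atTop ≤ γ / (β * lam2) := by
  obtain ⟨hlam2_pos, hgap⟩ := hL.spectral_gap hA hSC hWB hlam2
  have hγ : 0 ≤ γ := (norm_nonneg _).trans (hrbound 0 le_rfl)
  have hcons : ∀ t ≥ (0:ℝ), avg (x t) = avg (r t) := fun t => avg_eq_avg_of_hasDerivWithinAt hx hr
    (fun t ht => by rw [hdyn t ht, avg_add, avg_smul, hWB.avg_toEuclideanLin, mul_zero, zero_add])
    (by rw [avg, avg, ← sub_eq_zero, ← sub_div, ← Finset.sum_sub_distrib, hinit, zero_div])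
  set e := fun t => x t - avg (r t) • ones N
  have he : ∀ t ≥ (0:ℝ), HasDerivWithinAt e (-β • toEuclideanLin L (e t) + proj (r' t)) (Ici 0) t :=
    fun t ht => by
      refine ((hx t ht).fun_sub ((hr t ht).avg.smul_const (ones N))).congr_deriv ?_
      rw [hdyn t ht, proj]
      simp only [e, map_sub, map_smul, hL.toEuclideanLin_ones hA, smul_zero, sub_zero]
      abel
  have hdiss : ∀ t ≥ (0:ℝ), ⟪e t, -β • toEuclideanLin L (e t) + proj (r' t)⟫
      ≤ -(β * lam2) * ‖e t‖ ^ 2 + γ * ‖e t‖ := fun t ht => by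
    have hsum : ∑ i, e t i = 0 := by
      have : e t = proj (x t) := by simp only [e, proj, hcons t ht]
      rw [this, sum_proj_eq_zero]
    rw [inner_add_right, inner_smul_right, real_inner_comm]
    nlinarith [hgap (e t) hsum, real_inner_le_norm (e t) (proj (r' t)), hrbound t ht,
      norm_nonneg (e t)]
  have ha : 0 < β * lam2 := mul_pos hβ hlam2_pos
  obtain ⟨C, hC⟩ := exists_norm_le_of_inner_deriv_le ha he hdiss
  refine ⟨⟨C, hC⟩, fun i => ?_⟩
  simpa [e, ones] using limsup_abs_apply_le_of_limsup_norm_le hC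
    (limsup_norm_le_of_inner_deriv_le ha hγ he hdiss) i

/-- practical tracking of the continuous-time dynamic average consensus
algorithm `ẋ = -β L x + ṙ` over an SCWB digraph without delay. -/
theorem statement0 {N : ℕ} (hN : 2 ≤ N)
    (A L : Matrix (Fin N) (Fin N) ℝ)
    (hA : IsAdjacencyMatrix A) (hL : IsOutLaplacian A L)
    (hSC : IsStronglyConnected A) (hWB : IsWeightBalanced L)
    (β γ : ℝ) (hβ : 0 < β) (hγ : 0 ≤ γ)
    (lam2 : ℝ)
    (hlam2 : IsLeast {μ : ℝ | μ ≠ 0 ∧ μ ∈ spectrum ℝ ((2:ℝ)⁻¹ • (L + Lᵀ))} lam2)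
    (r x r' x' : ℝ → EuclideanSpace ℝ (Fin N))
    (hr : ∀ t ≥ (0:ℝ), HasDerivWithinAt r (r' t) (Set.Ici 0) t)
    (hx : ∀ t ≥ (0:ℝ), HasDerivWithinAt x (x' t) (Set.Ici 0) t)
    (hrbound : ∀ t ≥ (0:ℝ), ‖proj (r' t)‖ ≤ γ)
    (hdyn : ∀ t ≥ (0:ℝ), x' t = -β • (Matrix.toEuclideanLin L (x t)) + r' t)
    (hinit : ∑ i, (x 0 i - r 0 i) = 0) :
    (∃ C : ℝ, ∀ t ≥ (0:ℝ), ‖x t - avg (r t) • ones N‖ ≤ C) ∧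
    ∀ i : Fin N,
      Filter.limsup (fun t => |x t i - avg (r t)|) Filter.atTop ≤ γ / (β * lam2) :=
  statement0_general A L hA hL hSC hWB β γ hβ lam2 hlam2 r x r' x' hr hx hrbound hdyn hinit
end

section
/- Let L be the out-Laplacian of an SCWB digraph on N ≥ 2 nodes with maximum degree 𝖽ᵐᵃˣ. Then every nonzero eigenvalue λ ∈ ℂ of L satisfies 1/(2 𝖽ᵐᵃˣ) ≤ (π/2 − |arg λ|)/|λ|. Consequently, for every β > 0, the quantity τ̄ = min over nonzero eigenvalues λ of L of (π/2 − |arg λ|)/(β |λ|) satisfies τ̄ ≥ 1/(2 β 𝖽ᵐᵃˣ). -/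
open Matrix Filter

/-! By Gershgorin, every eigenvalue `λ` of `L` lies in a disc `|λ - dₖ| ≤ dₖ` centred at a
degree `dₖ ≤ dᵐᵃˣ`. Such a disc gives `|λ|² ≤ 2 dₖ Re λ`, i.e. `cos (arg λ) ≥ |λ| / (2 dᵐᵃˣ)`,
and `sin x ≤ x` applied to `x = π/2 - |arg λ|` turns this into the claimed bound. -/

namespace Complex

lemma sq_norm_le_two_mul_re_of_norm_sub_le {z : ℂ} {d : ℝ} (h : ‖z - d‖ ≤ d) :
    ‖z‖ ^ 2 ≤ 2 * d * z.re := by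
  have hsub : ‖z - d‖ ^ 2 = (z.re - d) ^ 2 + z.im ^ 2 := by
    rw [Complex.sq_norm, normSq_apply]
    simp only [sub_re, sub_im, ofReal_re, ofReal_im, sub_zero]
    ring
  have hz : ‖z‖ ^ 2 = z.re ^ 2 + z.im ^ 2 := by
    rw [Complex.sq_norm, normSq_apply]; ring
  nlinarith [norm_nonneg (z - d)]

lemma one_div_two_mul_le_of_norm_sub_le {z : ℂ} {d D : ℝ} (hz : z ≠ 0) (hzd : ‖z - d‖ ≤ d)
    (hdD : d ≤ D) : 1 / (2 * D) ≤ (Real.pi / 2 - |z.arg|) / ‖z‖ := by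
  have hsq := sq_norm_le_two_mul_re_of_norm_sub_le hzd
  have hnorm : 0 < ‖z‖ := norm_pos_iff.mpr hz
  have hd : 0 ≤ d := (norm_nonneg _).trans hzd
  have hre : 0 < z.re := by nlinarith
  have hD : 0 < D := by nlinarith
  have hcos : ‖z‖ / (2 * D) ≤ Real.cos z.arg := by
    rw [cos_arg hz, div_le_div_iff₀ (by positivity) hnorm]
    nlinarith
  have harg : |z.arg| < Real.pi / 2 := abs_arg_lt_pi_div_two_iff.mpr (Or.inl hre)
  have hsin : Real.sin (Real.pi / 2 - |z.arg|) ≤ Real.pi / 2 - |z.arg| := Real.sin_le (by linarith)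
  rw [Real.sin_pi_div_two_sub, Real.cos_abs] at hsin
  rw [le_div_iff₀ hnorm, one_div_mul_eq_div]
  exact hcos.trans hsin

end Complex

lemma IsOutLaplacian.exists_norm_sub_degree_le {N : ℕ} {A L : Matrix (Fin N) (Fin N) ℝ}
    (hA : IsAdjacencyMatrix A) (hL : IsOutLaplacian A L) {lam : ℂ}
    (hlam : lam ∈ spectrum ℂ (L.map Complex.ofReal)) :
    ∃ k, ‖lam - ((∑ j, A k j : ℝ) : ℂ)‖ ≤ ∑ j, A k j := by
  rw [← Matrix.spectrum_toLin', ← Module.End.hasEigenvalue_iff_mem_spectrum] at hlam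
  obtain ⟨k, hk⟩ := eigenvalue_mem_ball hlam
  have hradius : ∑ j ∈ Finset.univ.erase k, ‖L.map Complex.ofReal k j‖ = ∑ j, A k j := by
    rw [← Finset.add_sum_erase _ _ (Finset.mem_univ k), hA.2 k, zero_add]
    refine Finset.sum_congr rfl fun j hj => ?_
    rw [map_apply, hL.2 k j (Finset.ne_of_mem_erase hj).symm, Complex.norm_real, norm_neg,
      Real.norm_of_nonneg (hA.1 k j)]
  rw [Metric.mem_closedBall, hradius, map_apply, hL.1 k, dist_eq_norm] at hk
  exact ⟨k, hk⟩

theorem statement4_general {N : ℕ}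
    (A L : Matrix (Fin N) (Fin N) ℝ)
    (hA : IsAdjacencyMatrix A) (hL : IsOutLaplacian A L)
    (dmax : ℝ) (hdmax : IsGreatest (Set.range fun i => ∑ j, A i j) dmax) :
    (∀ lam ∈ spectrum ℂ (L.map Complex.ofReal), lam ≠ 0 →
      1 / (2 * dmax) ≤ (Real.pi / 2 - |lam.arg|) / ‖lam‖) ∧
    ∀ β > (0:ℝ), ∀ τbar : ℝ,
      IsLeast {t : ℝ | ∃ lam ∈ spectrum ℂ (L.map Complex.ofReal), lam ≠ 0 ∧
          t = (Real.pi / 2 - |lam.arg|) / (β * ‖lam‖)} τbar →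
      1 / (2 * β * dmax) ≤ τbar := by
  have hbound : ∀ lam ∈ spectrum ℂ (L.map Complex.ofReal), lam ≠ 0 →
      1 / (2 * dmax) ≤ (Real.pi / 2 - |lam.arg|) / ‖lam‖ := by
    intro lam hlam hne
    obtain ⟨k, hk⟩ := hL.exists_norm_sub_degree_le hA hlam
    exact Complex.one_div_two_mul_le_of_norm_sub_le hne hk (hdmax.2 ⟨k, rfl⟩)
  refine ⟨hbound, fun β hβ τbar hτ => ?_⟩
  obtain ⟨lam, hlam, hne, rfl⟩ := hτ.1
  calc 1 / (2 * β * dmax) = 1 / (2 * dmax) / β := by ring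
    _ ≤ (Real.pi / 2 - |lam.arg|) / ‖lam‖ / β :=
        div_le_div_of_nonneg_right (hbound lam hlam hne) hβ.le
    _ = (Real.pi / 2 - |lam.arg|) / (β * ‖lam‖) := by ring

/-- lower bound `1/(2 dᵐᵃˣ) ≤ (π/2 - |arg λ|)/|λ|` for every nonzero eigenvalue
of the out-Laplacian of an SCWB digraph, and hence `τ̄ ≥ 1/(2 β dᵐᵃˣ)`. -/
theorem statement4 {N : ℕ} (hN : 2 ≤ N)
    (A L : Matrix (Fin N) (Fin N) ℝ)
    (hA : IsAdjacencyMatrix A) (hL : IsOutLaplacian A L)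
    (hSC : IsStronglyConnected A) (hWB : IsWeightBalanced L)
    (dmax : ℝ) (hdmax : IsGreatest (Set.range fun i => ∑ j, A i j) dmax) :
    (∀ lam ∈ spectrum ℂ (L.map Complex.ofReal), lam ≠ 0 →
      1 / (2 * dmax) ≤ (Real.pi / 2 - |lam.arg|) / ‖lam‖) ∧
    ∀ β > (0:ℝ), ∀ τbar : ℝ,
      IsLeast {t : ℝ | ∃ lam ∈ spectrum ℂ (L.map Complex.ofReal), lam ≠ 0 ∧
          t = (Real.pi / 2 - |lam.arg|) / (β * ‖lam‖)} τbar →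
      1 / (2 * β * dmax) ≤ τbar :=
  statement4_general A L hA hL dmax hdmax
end

section
/- Let A ∈ ℝ^{n×n}, d ∈ ℤ_{≥0}, and u : ℤ_{≥0} → ℝⁿ, and let p : {k ∈ ℤ : k ≥ −d} → ℝⁿ satisfy p(k) = 0 for −d ≤ k ≤ −1 and p(k+1) = p(k) + A p(k−d) + u(k) for all k ≥ 0. Then for all k ≥ 0, p(k) = e_d^{A(k−d)} p(0) + Σ_{j=0}^{k−1} e_d^{A(k−1−d−j)} u(j), where e_d^{A·} is the delayed matrix exponential. -/
/-- The delayed matrix exponential `e_d^{A k}`: zero for `k < -d`, and for `k ≥ -d` equal to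
`∑_{l=0}^{m_k} C(k-(l-1)d, l) Aˡ` with `m_k = max(⌈k/(d+1)⌉, 0)`. -/
noncomputable def delayExp {n : ℕ} (A : Matrix (Fin n) (Fin n) ℝ) (d : ℕ) (k : ℤ) :
    Matrix (Fin n) (Fin n) ℝ :=
  if k < -(d:ℤ) then 0
  else ∑ l ∈ Finset.range ((max (⌈(k : ℚ) / ((d : ℚ) + 1)⌉) 0).toNat + 1),
    (((k - ((l : ℤ) - 1) * (d : ℤ)).toNat.choose l : ℝ)) • A ^ l

/-- Auxiliary truncated sum for the delayed matrix exponential. -/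
noncomputable def dSum {n : ℕ} (A : Matrix (Fin n) (Fin n) ℝ) (d : ℕ) (k : ℤ) (L : ℕ) :
    Matrix (Fin n) (Fin n) ℝ :=
  ∑ l ∈ Finset.range L, (((k - ((l : ℤ) - 1) * (d : ℤ)).toNat.choose l : ℝ)) • A ^ l

lemma delayExp_of_lt {n : ℕ} (A : Matrix (Fin n) (Fin n) ℝ) (d : ℕ) {k : ℤ}
    (h : k < -(d:ℤ)) : delayExp A d k = 0 := if_pos h

lemma coeff_vanish (d : ℕ) (k : ℤ) (l : ℕ)
    (h : (max (⌈(k : ℚ) / ((d : ℚ) + 1)⌉) 0).toNat < l) :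
    (k - ((l : ℤ) - 1) * (d : ℤ)).toNat.choose l = 0 := by
  set c : ℤ := ⌈(k : ℚ) / ((d : ℚ) + 1)⌉ with hc
  have hd : (0:ℚ) < (d:ℚ) + 1 := by positivity
  have h1 : (k:ℚ) / ((d:ℚ)+1) ≤ (c:ℚ) := Int.le_ceil _
  have h2 : (k:ℚ) ≤ (c:ℚ) * ((d:ℚ)+1) := (div_le_iff₀ hd).mp h1
  have h3 : k ≤ c * ((d:ℤ)+1) := by exact_mod_cast h2
  have h4 : c + 1 ≤ (l:ℤ) := by omega
  have h5 : c * ((d:ℤ)+1) ≤ ((l:ℤ)-1) * ((d:ℤ)+1) := by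
    apply mul_le_mul_of_nonneg_right (by omega) (by positivity)
  have h6 : k - ((l:ℤ)-1) * d < l := by nlinarith
  exact Nat.choose_eq_zero_of_lt (by omega)

lemma delayExp_eq_dSum {n : ℕ} (A : Matrix (Fin n) (Fin n) ℝ) (d : ℕ) (k : ℤ)
    (hk : -(d:ℤ) ≤ k) (L : ℕ)
    (hL : (max (⌈(k : ℚ) / ((d : ℚ) + 1)⌉) 0).toNat + 1 ≤ L) :
    delayExp A d k = dSum A d k L := by
  rw [delayExp, if_neg (by omega), dSum]
  apply Finset.sum_subset (Finset.range_subset_range.2 hL)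
  intro l _ hl
  simp only [Finset.mem_range, not_lt] at hl
  rw [coeff_vanish d k l (by omega), Nat.cast_zero, zero_smul]

lemma delayExp_one {n : ℕ} (A : Matrix (Fin n) (Fin n) ℝ) (d : ℕ) (k : ℤ)
    (h1 : -(d:ℤ) ≤ k) (h2 : k ≤ 0) : delayExp A d k = 1 := by
  have hM : (max (⌈(k : ℚ) / ((d : ℚ) + 1)⌉) 0).toNat = 0 := by
    have : ⌈(k : ℚ) / ((d : ℚ) + 1)⌉ ≤ 0 := by
      apply Int.ceil_le.2
      push_cast
      apply div_nonpos_of_nonpos_of_nonneg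
      · exact_mod_cast h2
      · positivity
    omega
  rw [delayExp, if_neg (by omega), hM]
  simp

lemma M_mono (d : ℕ) {a b : ℤ} (h : a ≤ b) :
    (max (⌈(a:ℚ) / ((d:ℚ)+1)⌉) 0).toNat ≤ (max (⌈(b:ℚ) / ((d:ℚ)+1)⌉) 0).toNat := by
  have : ⌈(a:ℚ) / ((d:ℚ)+1)⌉ ≤ ⌈(b:ℚ) / ((d:ℚ)+1)⌉ := by
    apply Int.ceil_le_ceil
    apply div_le_div_of_nonneg_right ?_ (by positivity)
    exact_mod_cast h
  omega

lemma pascal_int (x : ℤ) (t : ℕ) (hx : x < 0 → 1 ≤ t) :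
    ((x+1).toNat).choose (t+1) = x.toNat.choose (t+1) + x.toNat.choose t := by
  rcases le_or_gt 0 x with h | h
  · have h1 : (x+1).toNat = x.toNat + 1 := by omega
    rw [h1, Nat.choose_succ_succ, add_comm]
  · have h1 : (x+1).toNat = 0 := by omega
    have h2 : x.toNat = 0 := by omega
    have ht := hx h
    rw [h1, h2, Nat.choose_eq_zero_of_lt (by omega), Nat.choose_eq_zero_of_lt (by omega)]

lemma dSum_rec {n : ℕ} (A : Matrix (Fin n) (Fin n) ℝ) (d : ℕ) (m : ℤ) (hm : 0 ≤ m) (L : ℕ) :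
    dSum A d (m+1) (L+1) = dSum A d m (L+1) + A * dSum A d (m - d) L := by
  have hcoef : ∀ l : ℕ,
      (((m + 1 - (((l+1 : ℕ) : ℤ) - 1) * (d:ℤ)).toNat.choose (l+1) : ℝ))
        = (((m - (((l+1 : ℕ) : ℤ) - 1) * (d:ℤ)).toNat.choose (l+1) : ℝ))
          + (((m - (d:ℤ) - ((l : ℤ) - 1) * (d:ℤ)).toNat.choose l : ℝ)) := by
    intro l
    have e1 : m + 1 - (((l+1 : ℕ) : ℤ) - 1) * (d:ℤ) = (m - l*d) + 1 := by push_cast; ring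
    have e2 : m - (((l+1 : ℕ) : ℤ) - 1) * (d:ℤ) = m - l*d := by push_cast; ring
    have e3 : m - (d:ℤ) - ((l : ℤ) - 1) * (d:ℤ) = m - l*d := by ring
    rw [e1, e2, e3]
    have hp := pascal_int (m - l*d) l (by
      intro hneg
      rcases Nat.eq_zero_or_pos l with rfl | h1
      · simp at hneg; omega
      · exact h1)
    exact_mod_cast hp
  rw [dSum, dSum, dSum, Finset.mul_sum, Finset.sum_range_succ', Finset.sum_range_succ']
  have hterm : ∀ l ∈ Finset.range L,
      (((m + 1 - (((l+1 : ℕ) : ℤ) - 1) * (d:ℤ)).toNat.choose (l+1) : ℝ)) • A ^ (l+1)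
        = (((m - (((l+1 : ℕ) : ℤ) - 1) * (d:ℤ)).toNat.choose (l+1) : ℝ)) • A ^ (l+1)
          + A * ((((m - (d:ℤ) - ((l : ℤ) - 1) * (d:ℤ)).toNat.choose l : ℝ)) • A ^ l) := by
    intro l _
    rw [hcoef l, add_smul, mul_smul_comm, ← pow_succ']
  rw [Finset.sum_congr rfl hterm, Finset.sum_add_distrib]
  simp only [Nat.cast_zero, zero_sub, pow_zero, Nat.choose_zero_right]
  abel

set_option maxHeartbeats 1000000 in
lemma delayExp_rec {n : ℕ} (A : Matrix (Fin n) (Fin n) ℝ) (d : ℕ) (m : ℤ)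
    (hm : -(d:ℤ) ≤ m) :
    delayExp A d (m+1) = delayExp A d m + A * delayExp A d (m - d) := by
  rcases lt_or_ge m 0 with h | h
  · rw [delayExp_one A d m hm (by omega), delayExp_one A d (m+1) (by omega) (by omega),
      delayExp_of_lt A d (by omega), mul_zero, add_zero]
  · set L : ℕ := (max (⌈((m+1 : ℤ) : ℚ) / ((d : ℚ) + 1)⌉) 0).toNat + 2 with hLdef
    have hm1 := M_mono (a := m) (b := m+1) d (by omega)
    have hm2 := M_mono (a := m - d) (b := m+1) d (by omega)
    rw [delayExp_eq_dSum A d (m+1) (by omega) (L+1) (by omega),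
      delayExp_eq_dSum A d m (by omega) (L+1) (by omega),
      delayExp_eq_dSum A d (m - d) (by omega) L (by omega)]
    exact dSum_rec A d m h L

lemma toE_mul {n : ℕ} (A B : Matrix (Fin n) (Fin n) ℝ) (v : EuclideanSpace ℝ (Fin n)) :
    Matrix.toEuclideanLin (A * B) v = Matrix.toEuclideanLin A (Matrix.toEuclideanLin B v) := by
  simp [Matrix.toEuclideanLin_apply, Matrix.mulVec_mulVec]

lemma toE_add {n : ℕ} (A B : Matrix (Fin n) (Fin n) ℝ) (v : EuclideanSpace ℝ (Fin n)) :
    Matrix.toEuclideanLin (A + B) v = Matrix.toEuclideanLin A v + Matrix.toEuclideanLin B v := by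
  simp [Matrix.toEuclideanLin_apply, Matrix.add_mulVec]

lemma toE_one {n : ℕ} (v : EuclideanSpace ℝ (Fin n)) :
    Matrix.toEuclideanLin (1 : Matrix (Fin n) (Fin n) ℝ) v = v := by
  simp [Matrix.toEuclideanLin_apply]

lemma toE_zero {n : ℕ} (v : EuclideanSpace ℝ (Fin n)) :
    Matrix.toEuclideanLin (0 : Matrix (Fin n) (Fin n) ℝ) v = 0 := by
  simp [Matrix.toEuclideanLin_apply]

set_option maxHeartbeats 1000000 in
/-- variation-of-constants formula for the forced delay difference equation
`p(k+1) = p(k) + A p(k-d) + u(k)` with zero pre-shape, in terms of the delayed matrix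
exponential. -/
theorem statement13 {n : ℕ} (A : Matrix (Fin n) (Fin n) ℝ) (d : ℕ)
    (u p : ℤ → EuclideanSpace ℝ (Fin n))
    (hp0 : ∀ k : ℤ, -(d:ℤ) ≤ k → k ≤ -1 → p k = 0)
    (hrec : ∀ k : ℤ, 0 ≤ k →
      p (k + 1) = p k + Matrix.toEuclideanLin A (p (k - d)) + u k) :
    ∀ k : ℤ, 0 ≤ k →
      p k = Matrix.toEuclideanLin (delayExp A d (k - d)) (p 0) +
        ∑ j ∈ Finset.range k.toNat,
          Matrix.toEuclideanLin (delayExp A d (k - 1 - d - j)) (u j) := by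
  have key : ∀ N : ℕ, p (N : ℤ) =
      Matrix.toEuclideanLin (delayExp A d ((N : ℤ) - d)) (p 0) +
        ∑ j ∈ Finset.range N,
          Matrix.toEuclideanLin (delayExp A d ((N : ℤ) - 1 - d - j)) (u j) := by
    intro N
    induction N using Nat.strong_induction_on with
    | _ N IH =>
      match N with
      | 0 =>
        rw [delayExp_one A d _ (by omega) (by omega)]
        simp [toE_one]
      | Nat.succ N =>
        have step1 : p ((N : ℤ) + 1) = p N +
            Matrix.toEuclideanLin A (p ((N : ℤ) - d)) + u N := hrec N (by positivity)
        have hmid : p ((N : ℤ) - d) =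
            Matrix.toEuclideanLin (delayExp A d ((N : ℤ) - d - d)) (p 0) +
              ∑ j ∈ Finset.range N,
                Matrix.toEuclideanLin (delayExp A d ((N : ℤ) - 1 - d - j - d)) (u j) := by
          by_cases hd : d ≤ N
          · have hIH := IH (N - d) (by omega)
            have e1 : ((N - d : ℕ) : ℤ) = (N : ℤ) - d := by omega
            rw [e1] at hIH
            have e2 : ∀ j : ℕ, (N : ℤ) - d - 1 - d - (j:ℤ) = (N : ℤ) - 1 - d - j - d := by
              intro j; ring
            simp only [e2] at hIH
            rw [hIH]
            congr 1
            apply Finset.sum_subset (Finset.range_subset_range.2 (by omega))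
            intro j _ hj
            simp only [Finset.mem_range, not_lt] at hj
            rw [delayExp_of_lt A d (by omega), toE_zero]
          · rw [hp0 ((N:ℤ) - d) (by omega) (by omega), delayExp_of_lt A d (by omega), toE_zero,
              zero_add]
            rw [Finset.sum_eq_zero]
            intro j hj
            rw [delayExp_of_lt A d (by omega), toE_zero]
        push_cast
        rw [step1, IH N (Nat.lt_succ_self N), hmid, Finset.sum_range_succ]
        have e4 : ((N:ℤ) + 1 - 1 - (d:ℤ) - (N:ℤ)) = -(d:ℤ) := by ring
        rw [e4, delayExp_one A d (-(d:ℤ)) (by omega) (by omega), toE_one]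
        have e2 : ((N:ℤ) + 1 - (d:ℤ)) = ((N:ℤ) - d) + 1 := by ring
        rw [e2, delayExp_rec A d ((N:ℤ) - d) (by omega), toE_add]
        have e3 : ∀ j ∈ Finset.range N,
            Matrix.toEuclideanLin (delayExp A d ((N:ℤ) + 1 - 1 - d - j)) (u j)
              = Matrix.toEuclideanLin (delayExp A d ((N:ℤ) - 1 - d - j)) (u j)
                + Matrix.toEuclideanLin A
                    (Matrix.toEuclideanLin (delayExp A d ((N:ℤ) - 1 - d - j - d)) (u j)) := by
          intro j hj
          simp only [Finset.mem_range] at hj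
          have e5 : (N:ℤ) + 1 - 1 - (d:ℤ) - j = ((N:ℤ) - 1 - d - j) + 1 := by ring
          rw [e5, delayExp_rec A d ((N:ℤ) - 1 - d - j) (by omega), toE_add, toE_mul]
        rw [Finset.sum_congr rfl e3, Finset.sum_add_distrib, toE_mul, map_add, map_sum]
        abel
  intro k hk
  obtain ⟨N, rfl⟩ : ∃ N : ℕ, k = (N : ℤ) := ⟨k.toNat, by omega⟩
  simpa using key N
end

section
/- Let A ∈ ℝ^{n×n} and d ∈ ℤ_{≥0}. Then the delayed matrix exponential satisfies the recurrence e_d^{A(k+1)} = e_d^{A k} + A · e_d^{A(k−d)} for every integer k ≥ −d. In particular, the matrix-valued sequence X(k) = e_d^{A(k−d)} satisfies the homogeneous delay difference equation X(k+1) = X(k) + A X(k−d) for all k ≥ 0, with X(k) equal to I at k = 0 and equal to 0 for −d ≤ k ≤ −1 when d ≥ 1. -/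
/-- The bound index `m_k`. -/
noncomputable def mIdx (d : ℕ) (k : ℤ) : ℕ := (max (⌈(k : ℚ) / ((d : ℚ) + 1)⌉) 0).toNat

lemma mIdx_mono (d : ℕ) {k k' : ℤ} (h : k ≤ k') : mIdx d k ≤ mIdx d k' := by
  unfold mIdx
  apply Int.toNat_le_toNat
  apply max_le_max _ le_rfl
  apply Int.ceil_le_ceil
  have hk : (k:ℚ) ≤ (k':ℚ) := by exact_mod_cast h
  have hd : (0:ℚ) < (d:ℚ) + 1 := by positivity
  gcongr

lemma coeff_zero (d : ℕ) (k : ℤ) (l : ℕ) (hl : mIdx d k < l) :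
    ((k - ((l:ℤ) - 1) * d).toNat).choose l = 0 := by
  apply Nat.choose_eq_zero_of_lt
  have h1 : 1 ≤ l := Nat.lt_of_le_of_lt (Nat.zero_le _) hl
  have htn : ((mIdx d k : ℤ)) = max (⌈(k : ℚ) / ((d : ℚ) + 1)⌉) 0 :=
    Int.toNat_of_nonneg (le_max_right _ _)
  have hceil : ⌈(k:ℚ)/((d:ℚ)+1)⌉ ≤ (l:ℤ) - 1 := by
    have : ⌈(k:ℚ)/((d:ℚ)+1)⌉ ≤ (mIdx d k : ℤ) := htn ▸ le_max_left _ _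
    omega
  have hd : (0:ℚ) < (d:ℚ) + 1 := by positivity
  have hq : (k:ℚ)/((d:ℚ)+1) ≤ ((l:ℚ) - 1) := by
    have := Int.ceil_le.mp hceil
    calc (k:ℚ)/((d:ℚ)+1) ≤ (((l:ℤ) - 1 : ℤ) : ℚ) := this
    _ = (l:ℚ) - 1 := by push_cast; ring
  have hk : (k:ℚ) ≤ ((l:ℚ)-1) * ((d:ℚ)+1) := by
    rw [div_le_iff₀ hd] at hq; linarith
  have hz : k - ((l:ℤ)-1)*d ≤ (l:ℤ) - 1 := by
    have : (k:ℚ) - ((l:ℚ)-1)*(d:ℚ) ≤ (l:ℚ) - 1 := by nlinarith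
    exact_mod_cast this
  omega

lemma delayExp_eq_sum {n : ℕ} (A : Matrix (Fin n) (Fin n) ℝ) (d : ℕ) (k : ℤ)
    (hk : -(d:ℤ) ≤ k) (N : ℕ) (hN : mIdx d k < N) :
    delayExp A d k = ∑ l ∈ Finset.range N,
      (((k - ((l : ℤ) - 1) * (d : ℤ)).toNat.choose l : ℝ)) • A ^ l := by
  rw [delayExp, if_neg (not_lt.mpr hk)]
  apply Finset.sum_subset
  · exact Finset.range_subset_range.mpr (by change mIdx d k + 1 ≤ N; omega)
  · intro l _ hl
    simp only [Finset.mem_range, not_lt] at hl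
    have hl' : mIdx d k < l := by change mIdx d k + 1 ≤ l at hl; omega
    rw [coeff_zero d k l hl', Nat.cast_zero, zero_smul]

lemma delayExp_eq_one {n : ℕ} (A : Matrix (Fin n) (Fin n) ℝ) (d : ℕ) (k : ℤ)
    (hk : -(d:ℤ) ≤ k) (hk0 : k ≤ 0) : delayExp A d k = 1 := by
  have hm : mIdx d k = 0 := by
    unfold mIdx
    have hd : (0:ℚ) < (d:ℚ) + 1 := by positivity
    have : ⌈(k:ℚ)/((d:ℚ)+1)⌉ ≤ 0 := by
      apply Int.ceil_le.mpr
      simp only [Int.cast_zero]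
      apply div_nonpos_of_nonpos_of_nonneg _ hd.le
      exact_mod_cast hk0
    omega
  rw [delayExp_eq_sum A d k hk 1 (by omega)]
  simp

lemma pascal_toNat (a : ℤ) (l : ℕ) (h : a < 0 → 1 ≤ l) :
    ((a + 1).toNat).choose (l+1) = (a.toNat).choose (l+1) + (a.toNat).choose l := by
  rcases lt_or_ge a 0 with ha | ha
  · have hl := h ha
    have h1 : (a+1).toNat = 0 := by omega
    have h2 : a.toNat = 0 := by omega
    simp [h1, h2, Nat.choose_eq_zero_of_lt (show 0 < l+1 by omega),
      Nat.choose_eq_zero_of_lt (show 0 < l from hl)]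
  · have h1 : (a+1).toNat = a.toNat + 1 := by omega
    rw [h1, Nat.choose_succ_succ', Nat.add_comm]

/-- the delayed matrix exponential satisfies the recurrence
`e_d^{A(k+1)} = e_d^{A k} + A e_d^{A(k-d)}` for `k ≥ -d`; in particular
`X(k) = e_d^{A(k-d)}` solves the homogeneous delay difference equation
`X(k+1) = X(k) + A X(k-d)` for `k ≥ 0` with `X(0) = I` and `X(k) = 0` for `-d ≤ k ≤ -1`. -/
theorem statement14 {n : ℕ} (A : Matrix (Fin n) (Fin n) ℝ) (d : ℕ) :
    (∀ k : ℤ, -(d:ℤ) ≤ k →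
      delayExp A d (k + 1) = delayExp A d k + A * delayExp A d (k - d)) ∧
    (∀ k : ℤ, 0 ≤ k →
      delayExp A d (k + 1 - d) = delayExp A d (k - d) + A * delayExp A d (k - d - d)) ∧
    delayExp A d ((0:ℤ) - d) = 1 ∧
    (∀ k : ℤ, -(d:ℤ) ≤ k → k ≤ -1 → delayExp A d (k - d) = 0) := by
  have main : ∀ k : ℤ, -(d:ℤ) ≤ k →
      delayExp A d (k + 1) = delayExp A d k + A * delayExp A d (k - d) := by
    intro k hk
    rcases lt_or_ge k 0 with hneg | hpos
    · -- k < 0: both sides are 1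
      have hzero : delayExp A d (k - d) = 0 := by
        rw [delayExp, if_pos (by omega)]
      rw [hzero, mul_zero, add_zero, delayExp_eq_one A d (k+1) (by omega) (by omega),
        delayExp_eq_one A d k hk (by omega)]
    · -- k ≥ 0
      set M := mIdx d (k+1) with hM
      have hm2 : mIdx d k < M + 2 :=
        lt_of_le_of_lt (mIdx_mono d (show k ≤ k + 1 by omega)) (by omega)
      have hm3 : mIdx d (k - d) < M + 1 :=
        lt_of_le_of_lt (mIdx_mono d (show k - (d:ℤ) ≤ k + 1 by omega)) (by omega)
      have h1 : delayExp A d (k+1) = ∑ l ∈ Finset.range (M+2),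
          (((k + 1 - ((l : ℤ) - 1) * (d : ℤ)).toNat.choose l : ℝ)) • A ^ l :=
        delayExp_eq_sum A d (k+1) (by omega) (M+2) (by omega)
      have h2 : delayExp A d k = ∑ l ∈ Finset.range (M+2),
          (((k - ((l : ℤ) - 1) * (d : ℤ)).toNat.choose l : ℝ)) • A ^ l :=
        delayExp_eq_sum A d k hk (M+2) hm2
      have h3 : delayExp A d (k - d) = ∑ l ∈ Finset.range (M+1),
          (((k - d - ((l : ℤ) - 1) * (d : ℤ)).toNat.choose l : ℝ)) • A ^ l :=
        delayExp_eq_sum A d (k-d) (by omega) (M+1) hm3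
      rw [h1, h2, h3, Finset.mul_sum]
      have hA : ∀ i ∈ Finset.range (M+1),
          A * ((((k - d - ((i : ℤ) - 1) * (d : ℤ)).toNat.choose i : ℝ)) • A ^ i)
          = (((k - d - ((i : ℤ) - 1) * (d : ℤ)).toNat.choose i : ℝ)) • A ^ (i+1) := by
        intro i _
        rw [mul_smul_comm, ← pow_succ']
      rw [Finset.sum_congr rfl hA]
      rw [Finset.sum_range_succ' (fun l =>
          (((k + 1 - ((l : ℤ) - 1) * (d : ℤ)).toNat.choose l : ℝ)) • A ^ l) (M+1),
        Finset.sum_range_succ' (fun l =>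
          (((k - ((l : ℤ) - 1) * (d : ℤ)).toNat.choose l : ℝ)) • A ^ l) (M+1)]
      conv_rhs => rw [add_right_comm]
      rw [← Finset.sum_add_distrib]
      congr 1
      · apply Finset.sum_congr rfl
        intro l _
        have e1 : k + 1 - (((l+1:ℕ) : ℤ) - 1) * (d : ℤ) = (k - (l:ℤ)*d) + 1 := by
          push_cast; ring
        have e2 : k - (((l+1:ℕ) : ℤ) - 1) * (d : ℤ) = k - (l:ℤ)*d := by
          push_cast; ring
        have e3 : k - d - ((l : ℤ) - 1) * (d : ℤ) = k - (l:ℤ)*d := by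
          ring
        have key : ((k - (l:ℤ)*d + 1).toNat).choose (l+1)
            = ((k - (l:ℤ)*d).toNat).choose (l+1) + ((k - (l:ℤ)*d).toNat).choose l := by
          apply pascal_toNat
          intro ha
          by_contra hl
          push_neg at hl
          interval_cases l
          omega
        simp only [e1, e2, e3, key]
        push_cast
        rw [add_smul]
      · simp
  refine ⟨main, ?_, ?_, ?_⟩
  · intro k hk
    have := main (k - d) (by omega)
    have e : k - (d:ℤ) + 1 = k + 1 - d := by ring
    rw [e] at this
    exact this
  · exact delayExp_eq_one A d ((0:ℤ) - d) (by omega) (by omega)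
  · intro k h1 h2
    rw [delayExp, if_pos (by omega)]
end
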